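/- arXiv:2311.06294 — 2 statements merged into one kernel-verified Lean document; each statement's English description precedes it below -/
import Mathlib

section
/- The series of H(k)/k^3 over positive integers k converges to (5/4)ζ(4). -/
open scoped BigOperators

/-- The harmonic number `H k = ∑_{j=1}^k 1/j`. -/
noncomputable def H (k : ℕ) : ℝ := ∑ j ∈ Finset.Icc 1 k, (1 : ℝ) / j

/-- The generalized harmonic number `H^{(p)} k = ∑_{j=1}^k 1/j^p`. -/
noncomputable def Hgen (p k : ℕ) : ℝ := ∑ j ∈ Finset.Icc 1 k, (1 : ℝ) / (j : ℝ) ^ p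

/-!
Since `H m / m = ∑_{n ≥ 1} 1/(n (m + n))` (a telescoping series), the sum equals the double series
`S = ∑_{m,n ≥ 1} 1/(m² n (m + n))`. Adding `S` to itself with `m` and `n` exchanged gives
`∑_{m,n} (m + n)/(m² n² (m + n)) = ζ(2)²`, so `S = ζ(2)²/2 = π⁴/72 = 5 ζ(4)/4`.
-/

open Finset Filter Topology Real

theorem Finset.sum_range_sub_sum_range_add {M : Type*} [AddCommGroup M] (a : ℕ → M) (N k : ℕ) :
    ∑ n ∈ range N, (a n - a (n + k)) = ∑ j ∈ range k, a j - ∑ j ∈ range k, a (N + j) := by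
  have h₁ := sum_range_add a N k
  have h₂ := sum_range_add a k N
  rw [add_comm k N] at h₂
  simp only [sum_sub_distrib, add_comm _ k]
  rw [sub_eq_sub_iff_add_eq_add, ← h₁, h₂]

theorem hasSum_sub_add_of_antitone {a : ℕ → ℝ} (ha : Antitone a) (h0 : Tendsto a atTop (𝓝 0))
    (k : ℕ) : HasSum (fun n ↦ a n - a (n + k)) (∑ j ∈ range k, a j) := by
  rw [hasSum_iff_tendsto_nat_of_nonneg fun n ↦ sub_nonneg.2 (ha (Nat.le_add_right n k))]
  simp_rw [sum_range_sub_sum_range_add]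
  have hTail : Tendsto (fun N ↦ ∑ j ∈ range k, a (N + j)) atTop (𝓝 0) := by
    simpa using tendsto_finsetSum (range k) fun j _ ↦ h0.comp (tendsto_add_atTop_nat j)
  simpa using tendsto_const_nhds.sub hTail

theorem HasSum.of_add_swap {α : Type*} {F G : α × α → ℝ} {g : ℝ} (hF : 0 ≤ F)
    (hsym : ∀ p, F p + F p.swap = G p) (hG : HasSum G g) : HasSum F (g / 2) := by
  obtain ⟨t, ht⟩ : Summable F :=
    hG.summable.of_nonneg_of_le hF fun p : α × α ↦ by
      linarith [hsym p, show 0 ≤ F p.swap from hF p.swap]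
  have hswap : HasSum (fun p : α × α ↦ F p.swap) t := (Equiv.prodComm α α).hasSum_iff.2 ht
  have htt : t + t = g := ((ht.add hswap).congr_fun fun p ↦ (hsym p).symm).unique hG
  rwa [← htt, add_self_div_two]

theorem H_eq_sum_range (m : ℕ) : H m = ∑ j ∈ range m, 1 / ((j : ℝ) + 1) := by
  rw [H, ← Ico_add_one_right_eq_Icc, sum_Ico_eq_sum_range]
  simp [add_comm 1]

theorem hasSum_one_div_sub_one_div_add (m : ℕ) :
    HasSum (fun n : ℕ ↦ 1 / ((n : ℝ) + 1) - 1 / ((n : ℝ) + m + 2)) (H (m + 1)) := by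
  have hAnti : Antitone fun n : ℕ ↦ 1 / ((n : ℝ) + 1) := fun i j hij ↦
    one_div_le_one_div_of_le (by positivity) (by gcongr)
  rw [H_eq_sum_range]
  convert hasSum_sub_add_of_antitone hAnti tendsto_one_div_add_atTop_nhds_zero_nat (m + 1)
    using 3 with n
  push_cast
  ring

theorem hasSum_one_div_add_one_sq : HasSum (fun n : ℕ ↦ 1 / ((n : ℝ) + 1) ^ 2) (π ^ 2 / 6) := by
  simpa using (hasSum_nat_add_iff' 1).2 hasSum_zeta_two

/-- The term `1/(m² n (m + n))` of the double series, with `m, n` shifted to start at `0`. -/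
noncomputable def eulerDoubleTerm (p : ℕ × ℕ) : ℝ :=
  1 / (((p.1 : ℝ) + 1) ^ 2 * ((p.2 : ℝ) + 1) * ((p.1 : ℝ) + p.2 + 2))

theorem eulerDoubleTerm_nonneg : 0 ≤ eulerDoubleTerm := fun p ↦ by
  unfold eulerDoubleTerm; positivity

theorem eulerDoubleTerm_add_swap (p : ℕ × ℕ) :
    eulerDoubleTerm p + eulerDoubleTerm p.swap =
      1 / ((p.1 : ℝ) + 1) ^ 2 * (1 / ((p.2 : ℝ) + 1) ^ 2) := by
  simp only [eulerDoubleTerm, Prod.fst_swap, Prod.snd_swap]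
  field_simp
  ring

theorem hasSum_eulerDoubleTerm_fiber (m : ℕ) :
    HasSum (fun n ↦ eulerDoubleTerm (m, n)) (H (m + 1) / ((m : ℝ) + 1) ^ 3) := by
  have h := (hasSum_one_div_sub_one_div_add m).mul_left (((m : ℝ) + 1) ^ 3)⁻¹
  rw [← div_eq_inv_mul] at h
  refine h.congr_fun fun n ↦ ?_
  simp only [eulerDoubleTerm]
  field_simp
  ring

theorem hasSum_H_succ_div_cube :
    HasSum (fun m : ℕ ↦ H (m + 1) / ((m : ℝ) + 1) ^ 3) (π ^ 4 / 72) := by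
  have hSq := hasSum_one_div_add_one_sq
  have hProd := hSq.mul hSq <| hSq.summable.mul_of_nonneg hSq.summable
    (fun n ↦ by positivity) (fun n ↦ by positivity)
  have hDouble := HasSum.of_add_swap eulerDoubleTerm_nonneg eulerDoubleTerm_add_swap hProd
  convert hDouble.prod_fiberwise hasSum_eulerDoubleTerm_fiber using 1
  ring

theorem euler_sum_1 :
    HasSum (fun k : ℕ => (H (k+1) : ℂ) / ((k : ℂ) + 1) ^ 3) (5 * riemannZeta 4 / 4) := by
  have hVal : ((π ^ 4 / 72 : ℝ) : ℂ) = 5 * riemannZeta 4 / 4 := by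
    rw [riemannZeta_four]; push_cast; ring
  rw [← hVal]
  exact_mod_cast Complex.hasSum_ofReal.2 hasSum_H_succ_div_cube
end

section
/- The series of H(k)/(k+1)^3 over positive integers k converges to (1/4)ζ(4). -/
open scoped BigOperators

/-!
Write `T(r, s, u) = ∑_{m, n ≥ 1} 1 / (m^r n^s (m + n)^u)` (Tornheim's double series). Since
`(m + n)^4 = (m + n)^2 (m^2 + 2mn + n^2)`, the partial fraction identity
`1/(m²n²) = 1/(m²(m+n)²) + 1/(n²(m+n)²) + 2/(m(m+n)³) + 2/(n(m+n)³)` gives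
`ζ(2)² = 2 T(2,0,2) + 4 T(1,0,3)`, while splitting the double series `ζ(2)²` into the parts
`m < n`, `m > n` and `m = n` gives `ζ(2)² = 2 T(2,0,2) + ζ(4)`. Hence `T(1,0,3) = ζ(4)/4`, and
grouping the terms of `T(1,0,3)` according to `m + n = k + 1` turns it into `∑ H(k)/(k+1)³`.
-/

open Finset

lemma H_succ_eq_sum_range (n : ℕ) : H (n + 1) = ∑ k ∈ range (n + 1), 1 / ((k : ℝ) + 1) := by
  rw [H, ← Ico_add_one_right_eq_Icc, sum_Ico_eq_sum_range]
  simp [add_comm]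

theorem HasSum.sum_antidiagonal {M A : Type*} [AddCommMonoid M] [TopologicalSpace M]
    [ContinuousAdd M] [RegularSpace M] [AddCommMonoid A] [HasAntidiagonal A] {f : A × A → M}
    {a : M} (hf : HasSum f a) :
    HasSum (fun n ↦ ∑ p ∈ antidiagonal n, f p) a :=
  (HasAntidiagonal.sigmaAntidiagonalEquivProd.hasSum_iff.mpr hf).sigma fun n ↦ by
    rw [← sum_coe_sort]
    exact hasSum_fintype _

def natProdSplit : (ℕ × ℕ) ⊕ ((ℕ × ℕ) ⊕ ℕ) → ℕ × ℕ :=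
  Sum.elim (fun p ↦ (p.1, p.1 + p.2 + 1)) (Sum.elim (fun p ↦ (p.1 + p.2 + 1, p.2)) fun n ↦ (n, n))

lemma natProdSplit_bijective : Function.Bijective natProdSplit := by
  refine ⟨?_, fun ⟨i, j⟩ ↦ ?_⟩
  · rintro (⟨i, j⟩ | ⟨i, j⟩ | n) (⟨i', j'⟩ | ⟨i', j'⟩ | n') h <;>
      simp only [natProdSplit, Sum.elim_inl, Sum.elim_inr, Prod.mk.injEq, Sum.inl.injEq,
        Sum.inr.injEq, reduceCtorEq] at h ⊢ <;> omega
  · rcases lt_trichotomy i j with h | rfl | h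
    · exact ⟨.inl (i, j - i - 1), Prod.ext rfl (by dsimp [natProdSplit]; omega)⟩
    · exact ⟨.inr (.inr i), rfl⟩
    · exact ⟨.inr (.inl (i - j - 1, j)), Prod.ext (by dsimp [natProdSplit]; omega) rfl⟩

theorem hasSum_prod_nat_of_upper_lower_diag {M : Type*} [AddCommMonoid M] [TopologicalSpace M]
    [ContinuousAdd M] {f : ℕ × ℕ → M} {a b c : M}
    (hupper : HasSum (fun p : ℕ × ℕ ↦ f (p.1, p.1 + p.2 + 1)) a)
    (hlower : HasSum (fun p : ℕ × ℕ ↦ f (p.1 + p.2 + 1, p.2)) b)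
    (hdiag : HasSum (fun n ↦ f (n, n)) c) : HasSum f (a + (b + c)) :=
  (Equiv.ofBijective _ natProdSplit_bijective).hasSum_iff.mp (hupper.sum (hlower.sum hdiag))

theorem one_div_sq_mul_sq_eq {K : Type*} [Field K] {x y : K} (hx : x ≠ 0) (hy : y ≠ 0)
    (hxy : x + y ≠ 0) :
    1 / (x ^ 2 * y ^ 2) = 1 / (x ^ 2 * (x + y) ^ 2) + 1 / (y ^ 2 * (x + y) ^ 2)
      + 2 / (x * (x + y) ^ 3) + 2 / (y * (x + y) ^ 3) := by
  field_simp
  ring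

/-- The term of `T(r, s, u)` at `m = p.1 + 1`, `n = p.2 + 1`. -/
noncomputable def tornheimTerm (r s u : ℕ) (p : ℕ × ℕ) : ℝ :=
  1 / (((p.1 : ℝ) + 1) ^ r * ((p.2 : ℝ) + 1) ^ s * ((p.1 : ℝ) + p.2 + 2) ^ u)

namespace tornheimTerm

variable (r s u : ℕ) (p : ℕ × ℕ)

lemma nonneg : 0 ≤ tornheimTerm r s u p := by
  unfold tornheimTerm
  positivity

lemma add_one_le_left : tornheimTerm r s (u + 1) p ≤ tornheimTerm (r + 1) s u p := by
  unfold tornheimTerm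
  set x : ℝ := (p.1 : ℝ) + 1
  set y : ℝ := (p.2 : ℝ) + 1
  have hsum : (p.1 : ℝ) + p.2 + 2 = x + y := by ring
  rw [hsum]
  have hy : 0 ≤ y := by positivity
  set c := x ^ r * y ^ s * (x + y) ^ u
  apply one_div_le_one_div_of_le (by positivity)
  calc x ^ (r + 1) * y ^ s * (x + y) ^ u = c * x := by ring
    _ ≤ c * (x + y) := by gcongr; linarith
    _ = x ^ r * y ^ s * (x + y) ^ (u + 1) := by ring

lemma swap : tornheimTerm r s u p.swap = tornheimTerm s r u p := by
  simp only [tornheimTerm, Prod.fst_swap, Prod.snd_swap]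
  ring_nf

lemma add_one_le_right : tornheimTerm r s (u + 1) p ≤ tornheimTerm r (s + 1) u p := by
  simpa only [swap] using add_one_le_left s r u p.swap

lemma two_two_zero_eq :
    tornheimTerm 2 2 0 p = tornheimTerm 2 0 2 p + tornheimTerm 2 0 2 p.swap
      + 2 * tornheimTerm 1 0 3 p + 2 * tornheimTerm 1 0 3 p.swap := by
  simp only [tornheimTerm, Prod.fst_swap, Prod.snd_swap, pow_zero, pow_one, mul_one, mul_one_div]
  rw [show (p.2 : ℝ) + p.1 + 2 = (p.1 + 1) + (p.2 + 1) by ring,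
    show (p.1 : ℝ) + p.2 + 2 = (p.1 + 1) + (p.2 + 1) by ring]
  exact one_div_sq_mul_sq_eq (by positivity) (by positivity) (by positivity)

end tornheimTerm

lemma summable_tornheimTerm_two_two_zero : Summable (tornheimTerm 2 2 0) := by
  have hz : Summable fun n : ℕ ↦ 1 / ((n : ℝ) + 1) ^ 2 := by
    simpa using (summable_nat_add_iff 1).mpr (Real.summable_one_div_nat_pow.mpr one_lt_two)
  refine (hz.mul_of_nonneg hz (fun n ↦ by positivity) (fun n ↦ by positivity)).congr fun p ↦ ?_
  simp [tornheimTerm, mul_comm]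

lemma summable_tornheimTerm_two_zero_two : Summable (tornheimTerm 2 0 2) :=
  (summable_tornheimTerm_two_two_zero.of_nonneg_of_le (tornheimTerm.nonneg 2 1 1)
    (tornheimTerm.add_one_le_right 2 1 0)).of_nonneg_of_le (tornheimTerm.nonneg 2 0 2)
    (tornheimTerm.add_one_le_right 2 0 1)

lemma summable_tornheimTerm_one_zero_three : Summable (tornheimTerm 1 0 3) :=
  summable_tornheimTerm_two_zero_two.of_nonneg_of_le (tornheimTerm.nonneg 1 0 3)
    (tornheimTerm.add_one_le_left 1 0 2)

lemma hasSum_one_div_nat_add_one_pow_four :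
    HasSum (fun n : ℕ ↦ 1 / ((n : ℝ) + 1) ^ 4) (∑' n : ℕ, 1 / ((n : ℝ) + 1) ^ 4) :=
  Summable.hasSum <| by
    simpa using (summable_nat_add_iff 1).mpr (Real.summable_one_div_nat_pow.mpr (by norm_num))

theorem hasSum_tornheimTerm_one_zero_three :
    HasSum (tornheimTerm 1 0 3) ((∑' n : ℕ, 1 / ((n : ℝ) + 1) ^ 4) / 4) := by
  set Z := ∑' n : ℕ, 1 / ((n : ℝ) + 1) ^ 4
  set B := ∑' p, tornheimTerm 2 0 2 p
  set T := ∑' p, tornheimTerm 1 0 3 p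
  have hB : HasSum (tornheimTerm 2 0 2) B := summable_tornheimTerm_two_zero_two.hasSum
  have hT : HasSum (tornheimTerm 1 0 3) T := summable_tornheimTerm_one_zero_three.hasSum
  have hB' := (Equiv.prodComm ℕ ℕ).hasSum_iff.mpr hB
  have hT' := (Equiv.prodComm ℕ ℕ).hasSum_iff.mpr hT
  have hpartial : HasSum (tornheimTerm 2 2 0) (B + B + 2 * T + 2 * T) :=
    (((hB.add hB').add (hT.mul_left 2)).add (hT'.mul_left 2)).congr_fun
      tornheimTerm.two_two_zero_eq
  have hdiag : HasSum (tornheimTerm 2 2 0) (B + (B + Z)) := by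
    refine hasSum_prod_nat_of_upper_lower_diag (hB.congr_fun fun p ↦ ?_)
      (hB'.congr_fun fun p ↦ ?_) (hasSum_one_div_nat_add_one_pow_four.congr_fun fun n ↦ ?_) <;>
    · simp only [tornheimTerm, Function.comp_apply, Equiv.coe_prodComm, Prod.fst_swap,
        Prod.snd_swap]
      push_cast
      ring
  have hT_eq : T = Z / 4 := by linarith [hpartial.unique hdiag]
  rwa [hT_eq] at hT

lemma sum_antidiagonal_tornheimTerm_one_zero_three (n : ℕ) :
    ∑ p ∈ antidiagonal n, tornheimTerm 1 0 3 p = H (n + 1) / ((n : ℝ) + 2) ^ 3 := by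
  have hterm : ∀ p ∈ antidiagonal n,
      tornheimTerm 1 0 3 p = 1 / ((p.1 : ℝ) + 1) / ((n : ℝ) + 2) ^ 3 := by
    intro p hp
    rw [HasAntidiagonal.mem_antidiagonal] at hp
    simp only [tornheimTerm, ← hp, pow_zero, pow_one, mul_one, div_div]
    push_cast
    ring
  rw [sum_congr rfl hterm, ← sum_div, Nat.sum_antidiagonal_eq_sum_range_succ_mk,
    H_succ_eq_sum_range]

theorem hasSum_harmonic_div_cube :
    HasSum (fun n : ℕ ↦ H (n + 1) / ((n : ℝ) + 2) ^ 3) ((∑' n : ℕ, 1 / ((n : ℝ) + 1) ^ 4) / 4) :=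
  hasSum_tornheimTerm_one_zero_three.sum_antidiagonal.congr_fun fun n ↦
    (sum_antidiagonal_tornheimTerm_one_zero_three n).symm

lemma riemannZeta_four_eq_tsum : riemannZeta 4 = ((∑' n : ℕ, 1 / ((n : ℝ) + 1) ^ 4 : ℝ) : ℂ) := by
  rw [zeta_eq_tsum_one_div_nat_add_one_cpow (by norm_num), Complex.ofReal_tsum]
  push_cast
  simp [Complex.cpow_ofNat]

theorem euler_sum_10 :
    HasSum (fun k : ℕ => (H (k+1) : ℂ) / ((k : ℂ) + 2) ^ 3) (riemannZeta 4 / 4) := by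
  rw [riemannZeta_four_eq_tsum]
  exact_mod_cast Complex.hasSum_ofReal.mpr hasSum_harmonic_div_cube
end
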